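/- arXiv:2403.16475 — 3 statements merged into one kernel-verified Lean document; each statement's English description precedes it below -/
import Mathlib

section
/- For every x ∈ (−1,1) with x ≠ 0, the boundary values D₊(x) := lim_{ε→0⁺} D(x+iε) and D₋(x) := lim_{ε→0⁺} D(x−iε) exist and are given by D₊(x) = x/(1 − √(1−x²)) and D₋(x) = x/(1 + √(1−x²)); in particular D₊(x)·D₋(x) = 1. -/
open Complex Filter Set Topology

/-- Principal branch of √(z²−1), holomorphic on ℂ∖[−1,1]. -/
noncomputable def rr (z : ℂ) : ℂ :=
  Complex.exp ((1 / 2 : ℂ) * Complex.log (z - 1)) *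
    Complex.exp ((1 / 2 : ℂ) * Complex.log (z + 1))

/-- D(z) = z/(1 + i√(z²−1)). -/
noncomputable def DD (z : ℂ) : ℂ := z / (1 + Complex.I * rr z)

lemma exp_half_log_real {a : ℝ} (ha : 0 < a) :
    Complex.exp ((1 / 2 : ℂ) * (Real.log a : ℂ)) = (Real.sqrt a : ℂ) := by
  have h : ((1 / 2 : ℂ) * (Real.log a : ℂ)) = ((Real.log a * (1/2) : ℝ) : ℂ) := by
    push_cast; ring
  rw [h, ← Complex.ofReal_exp, ← Real.rpow_def_of_pos ha, ← Real.sqrt_eq_rpow]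

lemma exp_half_pi_I : Complex.exp ((1 / 2 : ℂ) * ((Real.pi : ℂ) * Complex.I)) = Complex.I := by
  have h : ((1 / 2 : ℂ) * ((Real.pi : ℂ) * Complex.I)) = ((Real.pi/2 : ℝ) : ℂ) * Complex.I := by
    push_cast; ring
  rw [h, Complex.exp_mul_I, ← Complex.ofReal_cos, ← Complex.ofReal_sin,
    Real.cos_pi_div_two, Real.sin_pi_div_two]
  simp

lemma exp_neg_half_pi_I :
    Complex.exp ((1 / 2 : ℂ) * (-((Real.pi : ℂ) * Complex.I))) = -Complex.I := by
  have h : ((1 / 2 : ℂ) * (-((Real.pi : ℂ) * Complex.I))) = ((-(Real.pi/2) : ℝ) : ℂ) * Complex.I := by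
    push_cast; ring
  rw [h, Complex.exp_mul_I, ← Complex.ofReal_cos, ← Complex.ofReal_sin]
  rw [Real.cos_neg, Real.sin_neg, Real.cos_pi_div_two, Real.sin_pi_div_two]
  simp

lemma sqrt_prod (x : ℝ) (h1 : 0 < 1 - x) :
    Real.sqrt (1 - x) * Real.sqrt (1 + x) = Real.sqrt (1 - x^2) := by
  rw [← Real.sqrt_mul h1.le]
  ring_nf

lemma rr_tendsto_pos (x : ℝ) (hx : x ∈ Set.Ioo (-1 : ℝ) 1) :
    Tendsto (fun ε : ℝ => rr ((x : ℂ) + (ε : ℂ) * Complex.I)) (𝓝[>] 0)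
      (𝓝 (Complex.I * (Real.sqrt (1 - x ^ 2) : ℂ))) := by
  have h1x : 0 < 1 - x := by linarith [hx.2]
  have hx1 : 0 < 1 + x := by linarith [hx.1]
  -- limit of log (z - 1)
  have h1 : Tendsto (fun ε : ℝ => ((x : ℂ) + (ε : ℂ) * Complex.I) - 1) (𝓝[>] 0)
      (𝓝[{z : ℂ | 0 ≤ z.im}] ((x : ℂ) - 1)) := by
    rw [tendsto_nhdsWithin_iff]
    constructor
    · apply tendsto_nhdsWithin_of_tendsto_nhds
      have hc : Continuous fun ε : ℝ => ((x : ℂ) + (ε : ℂ) * Complex.I) - 1 := by continuity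
      have := hc.tendsto 0
      simpa using this
    · filter_upwards [self_mem_nhdsWithin] with ε hε
      simp only [Set.mem_setOf_eq, Complex.sub_im, Complex.add_im, Complex.ofReal_im,
        Complex.mul_im, Complex.ofReal_re, Complex.I_im, Complex.I_re, Complex.one_im]
      simp only [Set.mem_Ioi] at hε
      nlinarith
  have hre : ((x : ℂ) - 1).re < 0 := by
    simp only [Complex.sub_re, Complex.ofReal_re, Complex.one_re]; linarith
  have him : ((x : ℂ) - 1).im = 0 := by simp
  have habs : ‖((x : ℂ) - 1)‖ = 1 - x := by
    have : ((x : ℂ) - 1) = ((x - 1 : ℝ) : ℂ) := by push_cast; ring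
    rw [this, Complex.norm_real, Real.norm_eq_abs, abs_of_neg (by linarith)]
    ring
  have hlog1 : Tendsto (fun ε : ℝ => Complex.log (((x : ℂ) + (ε : ℂ) * Complex.I) - 1))
      (𝓝[>] 0) (𝓝 ((Real.log (1 - x) : ℂ) + Real.pi * Complex.I)) := by
    have := (Complex.tendsto_log_nhdsWithin_im_nonneg_of_re_neg_of_im_zero hre him).comp h1
    rwa [habs] at this
  -- limit of log (z + 1)
  have h2 : Tendsto (fun ε : ℝ => ((x : ℂ) + (ε : ℂ) * Complex.I) + 1) (𝓝[>] 0)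
      (𝓝 ((x : ℂ) + 1)) := by
    apply tendsto_nhdsWithin_of_tendsto_nhds
    have hc : Continuous fun ε : ℝ => ((x : ℂ) + (ε : ℂ) * Complex.I) + 1 := by continuity
    simpa using hc.tendsto 0
  have hlog2 : Tendsto (fun ε : ℝ => Complex.log (((x : ℂ) + (ε : ℂ) * Complex.I) + 1))
      (𝓝[>] 0) (𝓝 ((Real.log (1 + x) : ℂ))) := by
    have hsl : (x : ℂ) + 1 ∈ Complex.slitPlane := by
      left
      simp only [Complex.add_re, Complex.ofReal_re, Complex.one_re]; linarith
    have hca := (continuousAt_clog hsl).tendsto.comp h2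
    have : Complex.log ((x : ℂ) + 1) = ((Real.log (1 + x) : ℝ) : ℂ) := by
      rw [Complex.ofReal_log hx1.le]
      push_cast
      ring_nf
    rwa [this] at hca
  have hfin := ((Complex.continuous_exp.tendsto _).comp (hlog1.const_mul (1/2 : ℂ))).mul
    ((Complex.continuous_exp.tendsto _).comp (hlog2.const_mul (1/2 : ℂ)))
  have hval : Complex.exp ((1/2 : ℂ) * ((Real.log (1 - x) : ℂ) + Real.pi * Complex.I)) *
      Complex.exp ((1/2 : ℂ) * (Real.log (1 + x) : ℂ)) =
      Complex.I * (Real.sqrt (1 - x ^ 2) : ℂ) := by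
    rw [mul_add, Complex.exp_add, exp_half_log_real h1x, exp_half_log_real hx1, exp_half_pi_I]
    rw [← sqrt_prod x h1x]
    push_cast
    ring
  rw [hval] at hfin
  exact hfin

lemma rr_tendsto_neg (x : ℝ) (hx : x ∈ Set.Ioo (-1 : ℝ) 1) :
    Tendsto (fun ε : ℝ => rr ((x : ℂ) - (ε : ℂ) * Complex.I)) (𝓝[>] 0)
      (𝓝 (-(Complex.I * (Real.sqrt (1 - x ^ 2) : ℂ)))) := by
  have h1x : 0 < 1 - x := by linarith [hx.2]
  have hx1 : 0 < 1 + x := by linarith [hx.1]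
  have h1 : Tendsto (fun ε : ℝ => ((x : ℂ) - (ε : ℂ) * Complex.I) - 1) (𝓝[>] 0)
      (𝓝[{z : ℂ | z.im < 0}] ((x : ℂ) - 1)) := by
    rw [tendsto_nhdsWithin_iff]
    constructor
    · apply tendsto_nhdsWithin_of_tendsto_nhds
      have hc : Continuous fun ε : ℝ => ((x : ℂ) - (ε : ℂ) * Complex.I) - 1 := by continuity
      simpa using hc.tendsto 0
    · filter_upwards [self_mem_nhdsWithin] with ε hε
      simp only [Set.mem_setOf_eq, Complex.sub_im, Complex.ofReal_im,
        Complex.mul_im, Complex.ofReal_re, Complex.I_im, Complex.I_re, Complex.one_im]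
      simp only [Set.mem_Ioi] at hε
      nlinarith
  have hre : ((x : ℂ) - 1).re < 0 := by
    simp only [Complex.sub_re, Complex.ofReal_re, Complex.one_re]; linarith
  have him : ((x : ℂ) - 1).im = 0 := by simp
  have habs : ‖((x : ℂ) - 1)‖ = 1 - x := by
    have : ((x : ℂ) - 1) = ((x - 1 : ℝ) : ℂ) := by push_cast; ring
    rw [this, Complex.norm_real, Real.norm_eq_abs, abs_of_neg (by linarith)]
    ring
  have hlog1 : Tendsto (fun ε : ℝ => Complex.log (((x : ℂ) - (ε : ℂ) * Complex.I) - 1))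
      (𝓝[>] 0) (𝓝 ((Real.log (1 - x) : ℂ) - Real.pi * Complex.I)) := by
    have := (Complex.tendsto_log_nhdsWithin_im_neg_of_re_neg_of_im_zero hre him).comp h1
    rwa [habs] at this
  have h2 : Tendsto (fun ε : ℝ => ((x : ℂ) - (ε : ℂ) * Complex.I) + 1) (𝓝[>] 0)
      (𝓝 ((x : ℂ) + 1)) := by
    apply tendsto_nhdsWithin_of_tendsto_nhds
    have hc : Continuous fun ε : ℝ => ((x : ℂ) - (ε : ℂ) * Complex.I) + 1 := by continuity
    simpa using hc.tendsto 0
  have hlog2 : Tendsto (fun ε : ℝ => Complex.log (((x : ℂ) - (ε : ℂ) * Complex.I) + 1))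
      (𝓝[>] 0) (𝓝 ((Real.log (1 + x) : ℂ))) := by
    have hsl : (x : ℂ) + 1 ∈ Complex.slitPlane := by
      left
      simp only [Complex.add_re, Complex.ofReal_re, Complex.one_re]; linarith
    have hca := (continuousAt_clog hsl).tendsto.comp h2
    have : Complex.log ((x : ℂ) + 1) = ((Real.log (1 + x) : ℝ) : ℂ) := by
      rw [Complex.ofReal_log hx1.le]
      push_cast
      ring_nf
    rwa [this] at hca
  have hfin := ((Complex.continuous_exp.tendsto _).comp (hlog1.const_mul (1/2 : ℂ))).mul
    ((Complex.continuous_exp.tendsto _).comp (hlog2.const_mul (1/2 : ℂ)))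
  have hval : Complex.exp ((1/2 : ℂ) * ((Real.log (1 - x) : ℂ) - Real.pi * Complex.I)) *
      Complex.exp ((1/2 : ℂ) * (Real.log (1 + x) : ℂ)) =
      -(Complex.I * (Real.sqrt (1 - x ^ 2) : ℂ)) := by
    rw [sub_eq_add_neg, mul_add, Complex.exp_add, exp_half_log_real h1x,
      exp_half_log_real hx1, exp_neg_half_pi_I]
    rw [← sqrt_prod x h1x]
    push_cast
    ring
  rw [hval] at hfin
  exact hfin

theorem stmt0 (x : ℝ) (hx : x ∈ Set.Ioo (-1 : ℝ) 1) (hx0 : x ≠ 0) :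
    Tendsto (fun ε : ℝ => DD ((x : ℂ) + (ε : ℂ) * Complex.I)) (𝓝[>] 0)
      (𝓝 ((x : ℂ) / (1 - (Real.sqrt (1 - x ^ 2) : ℂ)))) ∧
    Tendsto (fun ε : ℝ => DD ((x : ℂ) - (ε : ℂ) * Complex.I)) (𝓝[>] 0)
      (𝓝 ((x : ℂ) / (1 + (Real.sqrt (1 - x ^ 2) : ℂ)))) ∧
    ((x : ℂ) / (1 - (Real.sqrt (1 - x ^ 2) : ℂ))) *
      ((x : ℂ) / (1 + (Real.sqrt (1 - x ^ 2) : ℂ))) = 1 := by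
  set s : ℝ := Real.sqrt (1 - x ^ 2) with hs
  have hx2 : 0 < 1 - x ^ 2 := by nlinarith [hx.1, hx.2]
  have hs2 : s ^ 2 = 1 - x ^ 2 := Real.sq_sqrt hx2.le
  have hs1 : s < 1 := by nlinarith [Real.sqrt_nonneg (1 - x ^ 2), _root_.sq_abs x, abs_pos.2 hx0]
  have hs0 : 0 < s := Real.sqrt_pos.2 hx2
  have hden1 : (1 : ℂ) - (s : ℂ) ≠ 0 := by
    have : ((1 - s : ℝ) : ℂ) ≠ 0 := Complex.ofReal_ne_zero.2 (by linarith)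
    push_cast at this
    convert this using 1
  have hden2 : (1 : ℂ) + (s : ℂ) ≠ 0 := by
    have : ((1 + s : ℝ) : ℂ) ≠ 0 := Complex.ofReal_ne_zero.2 (by linarith)
    push_cast at this
    convert this using 1
  have hxC : (x : ℂ) ≠ 0 := Complex.ofReal_ne_zero.2 hx0
  have hsC : ((s : ℂ))^2 = 1 - (x : ℂ)^2 := by
    have : ((s^2 : ℝ) : ℂ) = ((1 - x^2 : ℝ) : ℂ) := by rw [hs2]
    push_cast at this
    exact this
  have hnump : Tendsto (fun ε : ℝ => (x : ℂ) + (ε : ℂ) * Complex.I) (𝓝[>] 0) (𝓝 (x : ℂ)) := by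
    apply tendsto_nhdsWithin_of_tendsto_nhds
    have hc : Continuous fun ε : ℝ => (x : ℂ) + (ε : ℂ) * Complex.I := by continuity
    simpa using hc.tendsto 0
  have hnumm : Tendsto (fun ε : ℝ => (x : ℂ) - (ε : ℂ) * Complex.I) (𝓝[>] 0) (𝓝 (x : ℂ)) := by
    apply tendsto_nhdsWithin_of_tendsto_nhds
    have hc : Continuous fun ε : ℝ => (x : ℂ) - (ε : ℂ) * Complex.I := by continuity
    simpa using hc.tendsto 0
  have hdenp : Tendsto (fun ε : ℝ => 1 + Complex.I * rr ((x : ℂ) + (ε : ℂ) * Complex.I))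
      (𝓝[>] 0) (𝓝 (1 - (s : ℂ))) := by
    have := (tendsto_const_nhds : Tendsto (fun _ : ℝ => (1:ℂ)) (𝓝[>] 0) (𝓝 1)).add ((rr_tendsto_pos x hx).const_mul Complex.I)
    have heq : (1 : ℂ) + Complex.I * (Complex.I * (s : ℂ)) = 1 - (s : ℂ) := by
      rw [← mul_assoc, Complex.I_mul_I]; ring
    rw [heq] at this
    exact this
  have hdenm : Tendsto (fun ε : ℝ => 1 + Complex.I * rr ((x : ℂ) - (ε : ℂ) * Complex.I))
      (𝓝[>] 0) (𝓝 (1 + (s : ℂ))) := by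
    have := (tendsto_const_nhds : Tendsto (fun _ : ℝ => (1:ℂ)) (𝓝[>] 0) (𝓝 1)).add ((rr_tendsto_neg x hx).const_mul Complex.I)
    have heq : (1 : ℂ) + Complex.I * -(Complex.I * (s : ℂ)) = 1 + (s : ℂ) := by
      rw [mul_neg, ← mul_assoc, Complex.I_mul_I]; ring
    rw [heq] at this
    exact this
  refine ⟨?_, ?_, ?_⟩
  · simpa only [DD, Pi.div_def] using hnump.div hdenp hden1
  · simpa only [DD, Pi.div_def] using hnumm.div hdenm hden2
  · rw [div_mul_div_comm, ← sq]
    have key : ((1 : ℂ) - (s : ℂ)) * ((1 : ℂ) + (s : ℂ)) = (x : ℂ)^2 := by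
      have : ((1 : ℂ) - (s : ℂ)) * ((1 : ℂ) + (s : ℂ)) = 1 - ((s : ℂ))^2 := by ring
      rw [this, hsC]; ring
    rw [key, div_self (pow_ne_zero 2 hxC)]
end

section
/- Fix k ∈ ℕ. There exist δ ∈ (0,1/2), τ₀ > 0 and C > 0, depending only on k, such that for every real τ ≥ τ₀ there is a holomorphic function F on the disc {|z−1| < δ} with F(z) = −( r(z)/4 − (ik/τ)·Log D(z) )² for all z in the disc with z ∉ (1−δ, 1], and such that |F(z) + ((z−1)/8)·(1 − 4k/τ)²| ≤ C·|z−1|^{3/2} for all |z−1| < δ; that is, the conformal map f⁽¹⁾(z) = −(¼√(z²−1) − (k/t)·ln D(z))² with t = −iτ extends analytically across the cut near z = 1 and satisfies f⁽¹⁾(z) = −((z−1)/8)(1−4k/|t|)²(1 + O((z−1)^{1/2})) as z → 1. -/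
open Complex Filter Set Topology Metric
open scoped NNReal ENNReal Real

/-- coefficients of arctan-type series -/
noncomputable def cc (n : ℕ) : ℂ := (-1) ^ n / (2 * n + 1)

noncomputable def pS : FormalMultilinearSeries ℂ ℂ ℂ := FormalMultilinearSeries.ofScalars ℂ cc

noncomputable def gg : ℂ → ℂ := pS.sum

lemma norm_cc_le (n : ℕ) : ‖cc n‖ ≤ 1 := by
  rw [cc, norm_div, norm_pow, norm_neg, norm_one, one_pow]
  have h2 : ‖(2 * (n:ℂ) + 1)‖ = 2*(n:ℝ)+1 := by
    rw [show (2 * (n:ℂ) + 1) = ((2*(n:ℝ)+1 : ℝ) : ℂ) by push_cast; ring, Complex.norm_real,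
      Real.norm_of_nonneg (by positivity)]
  rw [h2, div_le_one (by positivity)]
  norm_num

lemma one_le_radius_pS : 1 ≤ pS.radius := by
  have h : ∀ n : ℕ, ‖pS n‖ * ((1:ℝ≥0):ℝ) ^ n ≤ 1 := by
    intro n
    rw [NNReal.coe_one, one_pow, mul_one, pS, FormalMultilinearSeries.ofScalars_norm]
    exact norm_cc_le n
  simpa using pS.le_radius_of_bound 1 h

lemma hasSum_gg {u : ℂ} (hu : ‖u‖ < 1) : HasSum (fun n => cc n * u ^ n) (gg u) := by
  have hmem : u ∈ Metric.eball (0 : ℂ) pS.radius := by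
    rw [EMetric.mem_ball, edist_zero_right]
    refine lt_of_lt_of_le ?_ one_le_radius_pS
    rwa [← ENNReal.coe_one, enorm_eq_nnnorm, ENNReal.coe_lt_coe, ← NNReal.coe_lt_coe, coe_nnnorm, NNReal.coe_one]
  have := pS.hasSum hmem
  refine this.congr_fun fun n => ?_
  rw [pS, FormalMultilinearSeries.ofScalars_apply_eq, smul_eq_mul]

lemma gg_diffOn : DifferentiableOn ℂ gg (ball (0:ℂ) 1) := by
  have h0 : (0:ENNReal) < pS.radius := lt_of_lt_of_le one_pos one_le_radius_pS
  have := (pS.hasFPowerSeriesOnBall h0).differentiableOn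
  refine this.mono ?_
  intro u hu
  rw [mem_ball, dist_zero_right] at hu
  rw [EMetric.mem_ball, edist_zero_right]
  refine lt_of_lt_of_le ?_ one_le_radius_pS
  rwa [← ENNReal.coe_one, enorm_eq_nnnorm, ENNReal.coe_lt_coe, ← NNReal.coe_lt_coe, coe_nnnorm, NNReal.coe_one]

lemma gg_sub_one {u : ℂ} (hu : ‖u‖ ≤ 1/2) : ‖gg u - 1‖ ≤ 2 * ‖u‖ := by
  have hu1 : ‖u‖ < 1 := lt_of_le_of_lt hu (by norm_num)
  have hs := hasSum_gg hu1
  have hc0 : cc 0 * u ^ 0 = 1 := by simp [cc]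
  have hshift : HasSum (fun n => cc (n+1) * u ^ (n+1)) (gg u - 1) := by
    have h' := (hasSum_nat_add_iff' (f := fun n => cc n * u ^ n) 1).mpr hs
    rwa [Finset.range_one, Finset.sum_singleton, hc0] at h' 
  have hterm : ∀ n : ℕ, ‖cc (n+1) * u ^ (n+1)‖ ≤ ‖u‖ * ‖u‖ ^ n := by
    intro n
    calc ‖cc (n+1) * u ^ (n+1)‖ = ‖cc (n+1)‖ * ‖u‖ ^ (n+1) := by rw [norm_mul, norm_pow]
      _ ≤ 1 * ‖u‖ ^ (n+1) := by gcongr; exact norm_cc_le _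
      _ = ‖u‖ * ‖u‖ ^ n := by rw [one_mul, pow_succ']
  have hgeo : Summable (fun n : ℕ => ‖u‖ * ‖u‖ ^ n) :=
    (summable_geometric_of_lt_one (norm_nonneg u) hu1).mul_left _
  calc ‖gg u - 1‖ ≤ ∑' n, ‖cc (n+1) * u ^ (n+1)‖ := by
        rw [← hshift.tsum_eq]
        exact norm_tsum_le_tsum_norm (hgeo.of_nonneg_of_le (fun n => norm_nonneg _) hterm)
    _ ≤ ∑' n : ℕ, ‖u‖ * ‖u‖ ^ n := by
        exact Summable.tsum_le_tsum hterm (hgeo.of_nonneg_of_le (fun n => norm_nonneg _) hterm) hgeo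
    _ = ‖u‖ * (1 - ‖u‖)⁻¹ := by
        rw [tsum_mul_left, tsum_geometric_of_lt_one (norm_nonneg u) hu1]
    _ ≤ ‖u‖ * 2 := by
        refine mul_le_mul_of_nonneg_left ?_ (norm_nonneg u)
        rw [inv_le_comm₀ (by linarith) (by norm_num)]
        linarith
    _ = 2 * ‖u‖ := by ring

lemma norm_gg_le {u : ℂ} (hu : ‖u‖ ≤ 1/2) : ‖gg u‖ ≤ 2 := by
  calc ‖gg u‖ = ‖(gg u - 1) + 1‖ := by ring_nf
    _ ≤ ‖gg u - 1‖ + 1 := (norm_add_le _ _).trans (by norm_num)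
    _ ≤ 2 * ‖u‖ + 1 := by linarith [gg_sub_one hu]
    _ ≤ 2 := by linarith

lemma arctan_eq_gg {w : ℂ} (hw : ‖w‖ < 1) : Complex.arctan w = w * gg (w ^ 2) := by
  have hw2 : ‖w ^ 2‖ < 1 := by
    rw [norm_pow]
    calc ‖w‖^2 ≤ ‖w‖ * 1 := by rw [sq]; exact mul_le_mul_of_nonneg_left hw.le (norm_nonneg _)
    _ < 1 := by rwa [mul_one]
  have hs := (hasSum_gg hw2).mul_left w
  have hs2 : HasSum (fun n : ℕ => (-1) ^ n * w ^ (2 * n + 1) / (2 * n + 1 : ℕ)) (w * gg (w^2)) := by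
    refine hs.congr_fun fun n => ?_
    rw [cc, ← pow_mul]
    push_cast
    ring
  exact (Complex.hasSum_arctan hw).unique hs2

lemma rr_ne_zero (z : ℂ) : rr z ≠ 0 := mul_ne_zero (Complex.exp_ne_zero _) (Complex.exp_ne_zero _)

lemma rr_sq {z : ℂ} (h1 : z ≠ 1) (h2 : z ≠ -1) : rr z ^ 2 = z ^ 2 - 1 := by
  have e1 : Complex.exp ((1 / 2 : ℂ) * Complex.log (z - 1)) ^ 2 = z - 1 := by
    rw [← Complex.exp_nat_mul, show ((2:ℕ):ℂ) * ((1 / 2 : ℂ) * Complex.log (z - 1)) = Complex.log (z-1) by push_cast; ring,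
      Complex.exp_log (sub_ne_zero.mpr h1)]
  have e2 : Complex.exp ((1 / 2 : ℂ) * Complex.log (z + 1)) ^ 2 = z + 1 := by
    rw [← Complex.exp_nat_mul, show ((2:ℕ):ℂ) * ((1 / 2 : ℂ) * Complex.log (z + 1)) = Complex.log (z+1) by push_cast; ring,
      Complex.exp_log (by intro h; apply h2; linear_combination h)]
  calc rr z ^ 2 = Complex.exp ((1 / 2 : ℂ) * Complex.log (z - 1)) ^ 2 *
      Complex.exp ((1 / 2 : ℂ) * Complex.log (z + 1)) ^ 2 := by rw [rr, mul_pow]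
    _ = (z - 1) * (z + 1) := by rw [e1, e2]
    _ = z ^ 2 - 1 := by ring

lemma norm_rr {z : ℂ} (h1 : z ≠ 1) (h2 : z ≠ -1) :
    ‖rr z‖ = Real.sqrt (‖z - 1‖ * ‖z + 1‖) := by
  have habs : ∀ w : ℂ, w ≠ 0 → ‖Complex.exp ((1 / 2 : ℂ) * Complex.log w)‖
      = Real.sqrt ‖w‖ := by
    intro w hw
    rw [Complex.norm_exp]
    have : ((1 / 2 : ℂ) * Complex.log w).re = Real.log ‖w‖ * (1/2) := by
      simp [Complex.log_re, Complex.mul_re, Complex.log_im]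
      ring
    rw [this, Real.sqrt_eq_rpow, Real.rpow_def_of_pos (norm_pos_iff.mpr hw)]
  rw [rr, norm_mul, habs _ (sub_ne_zero.mpr h1), habs _ (by intro h; apply h2; linear_combination h),
    ← Real.sqrt_mul (norm_nonneg _)]

lemma norm_rr_le {z : ℂ} (hz : z ∈ ball (1:ℂ) (1/100)) (h1 : z ≠ 1) : ‖rr z‖ ≤ 1/4 := by
  rw [mem_ball, dist_eq] at hz
  have h2 : z ≠ -1 := by
    intro h
    rw [h, show ((-1:ℂ) - 1) = ((-2 : ℝ) : ℂ) by norm_num, Complex.norm_real] at hz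
    norm_num at hz
  rw [norm_rr h1 h2]
  have hz1 : ‖z - 1‖ ≤ 1/100 := le_of_lt hz
  have hz2 : ‖z + 1‖ ≤ 3 := by
    calc ‖z + 1‖ = ‖(z - 1) + 2‖ := by ring_nf
      _ ≤ ‖z - 1‖ + ‖(2:ℂ)‖ := norm_add_le _ _
      _ ≤ 1/100 + 2 := by norm_num [hz1]; linarith
      _ ≤ 3 := by norm_num
  calc Real.sqrt (‖z - 1‖ * ‖z + 1‖) ≤ Real.sqrt ((1/100) * 3) := by
        apply Real.sqrt_le_sqrt
        exact mul_le_mul hz1 hz2 (norm_nonneg _) (by norm_num)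
    _ ≤ 1/4 := by
        rw [show (1/100 * 3 : ℝ) = 3/100 by norm_num]
        rw [show (1/4 : ℝ) = Real.sqrt ((1/4)^2) by rw [Real.sqrt_sq]; norm_num]
        apply Real.sqrt_le_sqrt; norm_num

lemma re_pos_of_norm_sub_one_lt {w : ℂ} (h : ‖w - 1‖ < 1) : 0 < w.re := by
  have h2 := Complex.abs_re_le_norm (w - 1)
  have h3 : |w.re - 1| < 1 := lt_of_le_of_lt (by simpa using h2) h
  have := abs_lt.mp h3
  linarith [this.1]

lemma ne_neg_one_of_ball {z : ℂ} (hz : z ∈ ball (1:ℂ) (1/100)) : z ≠ -1 := by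
  intro h
  rw [mem_ball, dist_eq, h, show ((-1:ℂ) - 1) = ((-2 : ℝ) : ℂ) by norm_num] at hz
  rw [Complex.norm_real] at hz
  norm_num at hz

lemma ne_zero_of_ball {z : ℂ} (hz : z ∈ ball (1:ℂ) (1/100)) : z ≠ 0 := by
  intro h
  rw [mem_ball, dist_eq, h, show ((0:ℂ) - 1) = ((-1 : ℝ) : ℂ) by norm_num] at hz
  rw [Complex.norm_real] at hz
  norm_num at hz

lemma log_DD {z : ℂ} (hz : z ∈ ball (1:ℂ) (1/100)) (h1 : z ≠ 1) :
    Complex.log (DD z) = -Complex.I * Complex.arctan (rr z) := by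
  have h2 : z ≠ -1 := ne_neg_one_of_ball hz
  have hz0 : z ≠ 0 := ne_zero_of_ball hz
  have hr : ‖rr z‖ ≤ 1/4 := norm_rr_le hz h1
  have hzn : ‖z - 1‖ < 1/100 := by rwa [mem_ball, dist_eq] at hz
  have hden_norm : (3:ℝ)/4 ≤ ‖1 + Complex.I * rr z‖ := by
    have h4 := norm_add_le (1 + Complex.I * rr z) (-(Complex.I * rr z))
    simp only [add_neg_cancel_right, norm_neg, norm_mul, Complex.norm_I, one_mul, norm_one] at h4
    linarith
  have hden : (1 + Complex.I * rr z) ≠ 0 := by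
    intro h
    rw [h, norm_zero] at hden_norm; linarith
  have hden2 : (1 - Complex.I * rr z) ≠ 0 := by
    intro h
    have : ‖Complex.I * rr z‖ = 1 := by
      have : Complex.I * rr z = 1 := by linear_combination -h
      rw [this, norm_one]
    rw [norm_mul, Complex.norm_I, one_mul] at this
    rw [this] at hr; norm_num at hr
  have hd0 : DD z ≠ 0 := div_ne_zero hz0 hden
  have hr2 : rr z ^ 2 = z ^ 2 - 1 := rr_sq h1 h2
  have hsq : DD z ^ 2 = (1 - Complex.I * rr z) / (1 + Complex.I * rr z) := by
    rw [DD, div_pow, div_eq_div_iff (pow_ne_zero 2 hden) hden]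
    linear_combination (-(1 + Complex.I * rr z)) * hr2 + (1 + Complex.I * rr z) * rr z ^ 2 * Complex.I_sq
  -- re (DD z) > 0
  have hd1 : DD z - 1 = (z - (1 + Complex.I * rr z)) / (1 + Complex.I * rr z) := by
    rw [DD]; field_simp
  have hre_d : 0 < (DD z).re := by
    apply re_pos_of_norm_sub_one_lt
    rw [hd1, norm_div]
    rw [div_lt_one (by linarith)]
    calc ‖z - (1 + Complex.I * rr z)‖ = ‖(z - 1) + (-(Complex.I * rr z))‖ := by ring_nf
      _ ≤ ‖z - 1‖ + ‖-(Complex.I * rr z)‖ := norm_add_le _ _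
      _ ≤ 1/100 + 1/4 := by
          rw [norm_neg, norm_mul, Complex.norm_I, one_mul]
          exact add_le_add hzn.le hr
      _ < 3/4 := by norm_num
      _ ≤ ‖1 + Complex.I * rr z‖ := hden_norm
  have hre_d2 : 0 < (DD z ^ 2).re := by
    apply re_pos_of_norm_sub_one_lt
    have : DD z ^ 2 - 1 = (-2 * (Complex.I * rr z)) / (1 + Complex.I * rr z) := by
      rw [hsq, div_sub_one hden]; congr 1; ring
    rw [this, norm_div, div_lt_one (by linarith)]
    calc ‖-2 * (Complex.I * rr z)‖ = 2 * ‖rr z‖ := by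
          rw [norm_mul, norm_mul, Complex.norm_I, one_mul]
          norm_num
      _ ≤ 2 * (1/4) := by linarith
      _ < 3/4 := by norm_num
      _ ≤ ‖1 + Complex.I * rr z‖ := hden_norm
  have harg_d : |Complex.arg (DD z)| < π/2 := Complex.abs_arg_lt_pi_div_two_iff.mpr (Or.inl hre_d)
  have hlog2 : Complex.log (DD z ^ 2) = 2 * Complex.log (DD z) := by
    rw [sq, Complex.log_mul hd0 hd0, two_mul]
    have := abs_lt.mp harg_d
    constructor <;> [linarith [Real.pi_pos]; linarith]
  have hargne : Complex.arg (DD z ^ 2) ≠ π := by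
    intro h
    rw [Complex.arg_eq_pi_iff] at h
    linarith [h.1]
  have key : (1 + rr z * Complex.I) / (1 - rr z * Complex.I) = (DD z ^ 2)⁻¹ := by
    rw [hsq, inv_div]
    rw [mul_comm (rr z) Complex.I]
  calc Complex.log (DD z)
      = -Complex.I * (-Complex.I / 2 * Complex.log ((1 + rr z * Complex.I) / (1 - rr z * Complex.I))) := by
        rw [key, Complex.log_inv _ hargne, hlog2]
        linear_combination (Complex.log (DD z)) * Complex.I_sq
    _ = -Complex.I * Complex.arctan (rr z) := by rw [Complex.arctan]

lemma norm_u_le {z : ℂ} (hz : z ∈ ball (1:ℂ) (1/100)) :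
    ‖z ^ 2 - 1‖ ≤ 3 * ‖z - 1‖ ∧ ‖z ^ 2 - 1‖ ≤ 1/2 := by
  have hzn : ‖z - 1‖ < 1/100 := by rwa [mem_ball, dist_eq] at hz
  have hfac : z ^ 2 - 1 = (z - 1) * (z + 1) := by ring
  have hz2 : ‖z + 1‖ ≤ 3 := by
    calc ‖z + 1‖ = ‖(z - 1) + 2‖ := by ring_nf
      _ ≤ ‖z - 1‖ + ‖(2:ℂ)‖ := norm_add_le _ _
      _ ≤ 1/100 + 2 := by
          have : ‖(2:ℂ)‖ = 2 := by
            rw [show (2:ℂ) = ((2:ℝ):ℂ) by norm_num, Complex.norm_real]; norm_num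
          rw [this]; linarith
      _ ≤ 3 := by norm_num
  constructor
  · rw [hfac, norm_mul]
    calc ‖z - 1‖ * ‖z + 1‖ ≤ ‖z - 1‖ * 3 := by
          exact mul_le_mul_of_nonneg_left hz2 (norm_nonneg _)
      _ = 3 * ‖z - 1‖ := by ring
  · rw [hfac, norm_mul]
    calc ‖z - 1‖ * ‖z + 1‖ ≤ (1/100) * 3 :=
          mul_le_mul hzn.le hz2 (norm_nonneg _) (by norm_num)
      _ ≤ 1/2 := by norm_num

theorem stmt5 (k : ℕ) :
    ∃ δ ∈ Set.Ioo (0 : ℝ) (1 / 2), ∃ τ₀ > (0 : ℝ), ∃ C > (0 : ℝ),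
      ∀ τ : ℝ, τ₀ ≤ τ → ∃ F : ℂ → ℂ,
        DifferentiableOn ℂ F (ball (1 : ℂ) δ) ∧
        (∀ z ∈ ball (1 : ℂ) δ,
          z ∉ (fun x : ℝ => (x : ℂ)) '' Set.Ioc (1 - δ) 1 →
          F z = -((rr z / 4 -
            (Complex.I * (k : ℂ) / (τ : ℂ)) * Complex.log (DD z)) ^ 2)) ∧
        (∀ z ∈ ball (1 : ℂ) δ,
          ‖F z + ((z - 1) / 8) * (1 - 4 * (k : ℂ) / (τ : ℂ)) ^ 2‖
            ≤ C * ‖z - 1‖ ^ ((3 : ℝ) / 2)) := by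
  refine ⟨1/100, by norm_num, 8 * k + 8, by positivity, 2, by norm_num, fun τ hτ => ?_⟩
  have hτ0 : (0:ℝ) < τ := by
    have h8 : (0:ℝ) < 8 * k + 8 := by positivity
    linarith
  have hκ : ‖(k:ℂ) / (τ:ℂ)‖ ≤ 1/8 := by
    rw [norm_div, Complex.norm_natCast, Complex.norm_real, Real.norm_of_nonneg hτ0.le]
    rw [div_le_div_iff₀ hτ0 (by norm_num)]
    push_cast
    linarith
  set κ : ℂ := (k:ℂ) / (τ:ℂ) with hκdef
  refine ⟨fun z => -((z ^ 2 - 1) * (1/4 - κ * gg (z ^ 2 - 1)) ^ 2), ?_, ?_, ?_⟩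
  · -- differentiability
    have hφ : DifferentiableOn ℂ (fun z : ℂ => z ^ 2 - 1) (ball (1:ℂ) (1/100)) :=
      (differentiable_pow 2).sub_const 1 |>.differentiableOn
    have hmaps : MapsTo (fun z : ℂ => z ^ 2 - 1) (ball (1:ℂ) (1/100)) (ball (0:ℂ) 1) := by
      intro z hz
      rw [mem_ball, dist_zero_right]
      exact lt_of_le_of_lt (norm_u_le hz).2 (by norm_num)
    have hgφ : DifferentiableOn ℂ (fun z => gg (z ^ 2 - 1)) (ball (1:ℂ) (1/100)) :=
      gg_diffOn.comp hφ hmaps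
    have hQ : DifferentiableOn ℂ (fun z => (1/4 : ℂ) - κ * gg (z ^ 2 - 1)) (ball (1:ℂ) (1/100)) :=
      (differentiableOn_const _).sub ((differentiableOn_const κ).mul hgφ)
    exact ((hφ.mul (hQ.pow 2)).neg)
  · -- equality off the cut
    intro z hz hcut
    have h1 : z ≠ 1 := by
      intro h
      exact hcut ⟨1, ⟨by norm_num, le_refl 1⟩, by rw [h]; norm_num⟩
    have h2 : z ≠ -1 := ne_neg_one_of_ball hz
    have hr : ‖rr z‖ ≤ 1/4 := norm_rr_le hz h1
    have hr2 : rr z ^ 2 = z ^ 2 - 1 := rr_sq h1 h2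
    have hlog : Complex.log (DD z) = -Complex.I * (rr z * gg (z ^ 2 - 1)) := by
      rw [log_DD hz h1, arctan_eq_gg (lt_of_le_of_lt hr (by norm_num)), hr2]
    rw [hlog]
    have inner : rr z / 4 - Complex.I * (k:ℂ) / (τ:ℂ) * (-Complex.I * (rr z * gg (z ^ 2 - 1)))
        = rr z * (1/4 - κ * gg (z ^ 2 - 1)) := by
      rw [hκdef]
      linear_combination ((k:ℂ)/(τ:ℂ) * rr z * gg (z ^ 2 - 1)) * Complex.I_sq
    rw [inner]
    linear_combination ((1/4 - κ * gg (z ^ 2 - 1)) ^ 2) * hr2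
  · -- the bound
    intro z hz
    have hzn : ‖z - 1‖ < 1/100 := by rwa [mem_ball, dist_eq] at hz
    obtain ⟨hu3, hu12⟩ := norm_u_le hz
    set u : ℂ := z ^ 2 - 1 with hudef
    set Q : ℂ := 1/4 - κ * gg u with hQdef
    set Q1 : ℂ := 1/4 - κ with hQ1def
    have hQn : ‖Q‖ ≤ 1/2 := by
      rw [hQdef]
      calc ‖(1/4 : ℂ) - κ * gg u‖ ≤ ‖(1/4 : ℂ)‖ + ‖κ * gg u‖ := norm_sub_le _ _
        _ ≤ 1/4 + (1/8) * 2 := by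
            have h14 : ‖(1/4 : ℂ)‖ = 1/4 := by
              rw [show (1/4:ℂ) = ((1/4:ℝ):ℂ) by norm_num, Complex.norm_real]; norm_num
            rw [h14, norm_mul]
            have := mul_le_mul hκ (norm_gg_le hu12) (norm_nonneg _) (by norm_num)
            linarith
        _ ≤ 1/2 := by norm_num
    have hQ1n : ‖Q1‖ ≤ 3/8 := by
      rw [hQ1def]
      calc ‖(1/4 : ℂ) - κ‖ ≤ ‖(1/4 : ℂ)‖ + ‖κ‖ := norm_sub_le _ _
        _ ≤ 1/4 + 1/8 := by
            have h14 : ‖(1/4 : ℂ)‖ = 1/4 := by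
              rw [show (1/4:ℂ) = ((1/4:ℝ):ℂ) by norm_num, Complex.norm_real]; norm_num
            linarith
        _ ≤ 3/8 := by norm_num
    have hdiff : ‖Q - Q1‖ ≤ (3/4) * ‖z - 1‖ := by
      have : Q - Q1 = κ * (1 - gg u) := by rw [hQdef, hQ1def]; ring
      rw [this, norm_mul]
      have h1g : ‖(1:ℂ) - gg u‖ = ‖gg u - 1‖ := by rw [← norm_neg]; congr 1; ring
      rw [h1g]
      calc ‖κ‖ * ‖gg u - 1‖ ≤ (1/8) * (2 * ‖u‖) :=
            mul_le_mul hκ (gg_sub_one hu12) (norm_nonneg _) (by norm_num)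
        _ ≤ (1/8) * (2 * (3 * ‖z - 1‖)) := by
            have := hu3; nlinarith [norm_nonneg (z-1)]
        _ = (3/4) * ‖z - 1‖ := by ring
    have halg : -((z ^ 2 - 1) * Q ^ 2) + ((z - 1)/8) * (1 - 4 * (k:ℂ)/(τ:ℂ)) ^ 2
        = -((z - 1) ^ 2 * Q ^ 2) - 2 * (z - 1) * ((Q - Q1) * (Q + Q1)) := by
      rw [hQ1def, hκdef]; ring
    calc ‖-((z ^ 2 - 1) * Q ^ 2) + ((z - 1)/8) * (1 - 4 * (k:ℂ)/(τ:ℂ)) ^ 2‖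
        = ‖-((z - 1) ^ 2 * Q ^ 2) - 2 * (z - 1) * ((Q - Q1) * (Q + Q1))‖ := by rw [halg]
      _ ≤ ‖(z - 1) ^ 2 * Q ^ 2‖ + ‖2 * (z - 1) * ((Q - Q1) * (Q + Q1))‖ := by
          refine (norm_sub_le _ _).trans ?_
          rw [norm_neg]
      _ ≤ ‖z - 1‖ ^ 2 * (1/2) ^ 2 + 2 * ‖z - 1‖ * ((3/4) * ‖z - 1‖ * 1) := by
          have e1 : ‖(z - 1) ^ 2 * Q ^ 2‖ = ‖z - 1‖ ^ 2 * ‖Q‖ ^ 2 := by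
            rw [norm_mul, norm_pow, norm_pow]
          have e2 : ‖2 * (z - 1) * ((Q - Q1) * (Q + Q1))‖
              = 2 * ‖z - 1‖ * (‖Q - Q1‖ * ‖Q + Q1‖) := by
            rw [norm_mul, norm_mul, norm_mul]
            have : ‖(2:ℂ)‖ = 2 := by
              rw [show (2:ℂ) = ((2:ℝ):ℂ) by norm_num, Complex.norm_real]; norm_num
            rw [this]
          have hQQ1 : ‖Q + Q1‖ ≤ 1 := by
            calc ‖Q + Q1‖ ≤ ‖Q‖ + ‖Q1‖ := norm_add_le _ _
              _ ≤ 1 := by linarith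
          rw [e1, e2]
          gcongr <;> first
            | exact hQn
            | exact hdiff
            | exact hQQ1
            | positivity
      _ ≤ 2 * ‖z - 1‖ ^ 2 := by nlinarith [norm_nonneg (z - 1)]
      _ ≤ 2 * ‖z - 1‖ ^ ((3:ℝ)/2) := by
          rcases eq_or_ne z 1 with h | h
          · simp [h, Real.zero_rpow (by norm_num : (3:ℝ)/2 ≠ 0)]
          · have hpos : 0 < ‖z - 1‖ := by
              rw [norm_pos_iff]; exact sub_ne_zero.mpr h
            have : ‖z - 1‖ ^ 2 = ‖z - 1‖ ^ ((2:ℕ):ℝ) := by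
              rw [Real.rpow_natCast]
            rw [this]
            have := Real.rpow_le_rpow_of_exponent_ge hpos (by linarith : ‖z - 1‖ ≤ 1)
              (by norm_num : (3:ℝ)/2 ≤ ((2:ℕ):ℝ))
            linarith
end

section
/- Fix k ∈ ℕ. There exist δ ∈ (0,1/2), τ₀ > 0 and C > 0, depending only on k, such that for every real τ ≥ τ₀ there is a holomorphic function F on the disc {|z+1| < δ} with F(z) = −( r(z)/4 − (ik/τ)·Log(−D(z)) )² for all z in the disc with z ∉ [−1, −1+δ), and such that |F(z) − ((z+1)/8)·(1 − 4k/τ)²| ≤ C·|z+1|^{3/2} for all |z+1| < δ; that is, the conformal map f⁽⁻¹⁾(z) = −(¼√(z²−1) − (k/t)(ln D(z) + πi))² with t = −iτ extends analytically across the cut near z = −1 and satisfies f⁽⁻¹⁾(z) = ((z+1)/8)(1−4k/|t|)²(1 + O((z+1)^{1/2})) as z → −1. -/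
open Complex Filter Set Topology Metric

noncomputable def TT (x : ℂ) : ℂ := ∫ t in (0:ℝ)..1, (1 - x * (t:ℂ)^2)⁻¹

lemma den_lb {x : ℂ} {t : ℝ} (hx : ‖x‖ ≤ 3/4) (ht : |t| ≤ 1) :
    (1/4 : ℝ) ≤ ‖1 - x * (t:ℂ)^2‖ := by
  have h1 : ‖x * (t:ℂ)^2‖ ≤ 3/4 := by
    rw [norm_mul, norm_pow, Complex.norm_real]
    have h2 : ‖t‖^2 ≤ 1 := by
      rw [Real.norm_eq_abs]
      nlinarith [abs_nonneg t]
    nlinarith [norm_nonneg x, sq_nonneg (‖t‖)]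
  have := norm_sub_norm_le (1 : ℂ) (x * (t:ℂ)^2)
  simp only [norm_one] at this
  linarith

lemma den_ne {x : ℂ} {t : ℝ} (hx : ‖x‖ ≤ 3/4) (ht : |t| ≤ 1) :
    1 - x * (t:ℂ)^2 ≠ 0 := by
  intro h
  have := den_lb hx ht
  rw [h, norm_zero] at this
  linarith

lemma TT_contOn {x : ℂ} (hx : ‖x‖ ≤ 3/4) :
    ContinuousOn (fun t : ℝ => (1 - x * (t:ℝ)^2 : ℂ)⁻¹) (Set.uIcc (0:ℝ) 1) := by
  apply ContinuousOn.inv₀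
  · fun_prop
  · intro t ht
    apply den_ne hx
    rw [Set.uIcc_of_le (by norm_num : (0:ℝ) ≤ 1)] at ht
    rw [abs_le]
    exact ⟨by linarith [ht.1], ht.2⟩

lemma TT_int {x : ℂ} (hx : ‖x‖ ≤ 3/4) :
    IntervalIntegrable (fun t : ℝ => (1 - x * (t:ℝ)^2 : ℂ)⁻¹) MeasureTheory.volume 0 1 :=
  (TT_contOn hx).intervalIntegrable

lemma TT_sub_one {x : ℂ} (hx : ‖x‖ ≤ 3/4) : ‖TT x - 1‖ ≤ 4 * ‖x‖ := by
  have h1 : TT x - 1 = ∫ t in (0:ℝ)..1, ((1 - x * (t:ℂ)^2)⁻¹ - 1) := by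
    rw [intervalIntegral.integral_sub (TT_int hx) intervalIntegrable_const]
    simp [TT]
  rw [h1]
  have := intervalIntegral.norm_integral_le_of_norm_le_const
    (C := 4 * ‖x‖) (f := fun t : ℝ => (1 - x * (t:ℂ)^2)⁻¹ - 1)
    (a := 0) (b := 1) ?_
  · simpa using this
  · intro t ht
    rw [Set.uIoc_of_le (by norm_num : (0:ℝ) ≤ 1)] at ht
    have ht' : |t| ≤ 1 := by rw [abs_le]; exact ⟨by linarith [ht.1], ht.2⟩
    have hne := den_ne hx ht'
    have heq : (1 - x * (t:ℂ)^2)⁻¹ - 1 = (x * (t:ℂ)^2) * (1 - x * (t:ℂ)^2)⁻¹ := by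
      field_simp
      ring
    rw [heq, norm_mul, norm_mul, norm_pow, Complex.norm_real]
    have hinv : ‖(1 - x * (t:ℂ)^2)⁻¹‖ ≤ 4 := by
      rw [norm_inv]
      have := den_lb hx ht'
      rw [inv_le_comm₀ (by linarith) (by norm_num)]
      linarith
    have h2 : ‖t‖^2 ≤ 1 := by
      rw [Real.norm_eq_abs]; nlinarith [abs_nonneg t]
    have hx0 := norm_nonneg x
    nlinarith [mul_le_mul_of_nonneg_left hinv (mul_nonneg (norm_nonneg x) (sq_nonneg ‖t‖)),
      mul_le_mul_of_nonneg_left h2 (norm_nonneg x)]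

lemma TT_diff {x₀ : ℂ} (hx : ‖x₀‖ < 1/2) : DifferentiableAt ℂ TT x₀ := by
  have key := intervalIntegral.hasDerivAt_integral_of_dominated_loc_of_deriv_le
    (F := fun (x : ℂ) (t : ℝ) => (1 - x * (t:ℂ)^2)⁻¹)
    (F' := fun (x : ℂ) (t : ℝ) => (t:ℂ)^2 * ((1 - x * (t:ℂ)^2)^2)⁻¹)
    (x₀ := x₀) (a := 0) (b := 1) (bound := fun _ => 16)
    (μ := MeasureTheory.volume) (s := ball x₀ (1/4))
    (ball_mem_nhds x₀ (by norm_num))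
    ?_ ?_ ?_ ?_ ?_ ?_
  · exact key.2.differentiableAt
  · filter_upwards with x
    apply Measurable.aestronglyMeasurable
    apply Measurable.inv
    fun_prop
  · exact TT_int (by linarith)
  · apply Measurable.aestronglyMeasurable
    fun_prop
  · apply MeasureTheory.ae_of_all
    intro t ht x hxb
    rw [Set.uIoc_of_le (by norm_num : (0:ℝ) ≤ 1)] at ht
    have ht' : |t| ≤ 1 := by rw [abs_le]; exact ⟨by linarith [ht.1], ht.2⟩
    have hxn : ‖x‖ ≤ 3/4 := by
      have := mem_ball_iff_norm.mp hxb
      have := norm_sub_norm_le x x₀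
      linarith
    have hd := den_lb hxn ht'
    rw [norm_mul, norm_inv, norm_pow, norm_pow, Complex.norm_real]
    have h2 : ‖t‖^2 ≤ 1 := by rw [Real.norm_eq_abs]; nlinarith [abs_nonneg t]
    have h3 : (1/16 : ℝ) ≤ ‖1 - x * (t:ℂ)^2‖^2 := by nlinarith
    have h4 : (‖1 - x * (t:ℂ)^2‖^2)⁻¹ ≤ 16 := by
      rw [inv_le_comm₀ (by linarith) (by norm_num)]; linarith
    nlinarith [sq_nonneg ‖t‖, inv_nonneg.mpr (sq_nonneg ‖1 - x * (t:ℂ)^2‖)]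
  · exact intervalIntegrable_const
  · apply MeasureTheory.ae_of_all
    intro t ht x hxb
    rw [Set.uIoc_of_le (by norm_num : (0:ℝ) ≤ 1)] at ht
    have ht' : |t| ≤ 1 := by rw [abs_le]; exact ⟨by linarith [ht.1], ht.2⟩
    have hxn : ‖x‖ ≤ 3/4 := by
      have := mem_ball_iff_norm.mp hxb
      have := norm_sub_norm_le x x₀
      linarith
    have hne := den_ne hxn ht'
    have h0 : HasDerivAt (fun x : ℂ => 1 - x * (t:ℂ)^2) (-(t:ℂ)^2) x := by
      simpa using (hasDerivAt_id x).mul_const ((t:ℂ)^2) |>.const_sub 1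
    have := h0.inv hne
    refine this.congr_deriv ?_
    ring

lemma vTT {v : ℂ} (hv : ‖v‖ ≤ 1/4) :
    v * TT (v^2) = (Complex.log (1+v) - Complex.log (1-v))/2 := by
  have hv2 : ‖v^2‖ ≤ 3/4 := by
    rw [norm_pow]; nlinarith [norm_nonneg v]
  have key : ∀ t ∈ Set.uIcc (0:ℝ) 1,
      HasDerivAt (fun t : ℝ => (Complex.log (1 + v*(t:ℂ)) - Complex.log (1 - v*(t:ℂ)))/2)
        (v * (1 - v^2 * (t:ℂ)^2)⁻¹) t := by
    intro t ht
    rw [Set.uIcc_of_le (by norm_num : (0:ℝ) ≤ 1)] at ht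
    have ht' : |t| ≤ 1 := by rw [abs_le]; exact ⟨by linarith [ht.1], ht.2⟩
    have hvt : ‖v * (t:ℂ)‖ ≤ 1/4 := by
      rw [norm_mul, Complex.norm_real, Real.norm_eq_abs]
      nlinarith [norm_nonneg v, abs_nonneg t]
    have hne1 : (1 : ℂ) + v*(t:ℂ) ≠ 0 := by
      intro h
      have h2 : ‖v*(t:ℂ)‖ = 1 := by
        have : v*(t:ℂ) = -1 := by linear_combination h
        rw [this]; simp
      linarith
    have hne2 : (1 : ℂ) - v*(t:ℂ) ≠ 0 := by
      intro h
      have h2 : ‖v*(t:ℂ)‖ = 1 := by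
        have : v*(t:ℂ) = 1 := by linear_combination -h
        rw [this]; simp
      linarith
    have hsp1 : (1 : ℂ) + v*(t:ℂ) ∈ Complex.slitPlane := by
      apply Complex.mem_slitPlane_iff.mpr
      left
      have := Complex.abs_re_le_norm (v*(t:ℂ))
      simp only [Complex.add_re, Complex.one_re]
      have := abs_le.mp this
      linarith [this.1]
    have hsp2 : (1 : ℂ) - v*(t:ℂ) ∈ Complex.slitPlane := by
      apply Complex.mem_slitPlane_iff.mpr
      left
      have := Complex.abs_re_le_norm (v*(t:ℂ))
      simp only [Complex.sub_re, Complex.one_re]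
      have := abs_le.mp this
      linarith [this.2]
    have hbase : HasDerivAt (fun t : ℝ => ((t:ℂ))) 1 t := by
      simpa using (hasDerivAt_id t).ofReal_comp
    have h1 : HasDerivAt (fun t : ℝ => (1 : ℂ) + v*(t:ℂ)) v t := by
      simpa using (hbase.const_mul v).const_add 1
    have h2 : HasDerivAt (fun t : ℝ => (1 : ℂ) - v*(t:ℂ)) (-v) t := by
      simpa using (hbase.const_mul v).const_sub 1
    have hl1 := h1.clog_real hsp1
    have hl2 := h2.clog_real hsp2
    have := (hl1.sub hl2).div_const 2
    refine this.congr_deriv ?_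
    have hfac : (1 : ℂ) - v^2 * (t:ℂ)^2 = (1 + v*(t:ℂ)) * (1 - v*(t:ℂ)) := by ring
    rw [hfac]
    field_simp
    ring
  have hint : IntervalIntegrable (fun t : ℝ => v * (1 - v^2 * (t:ℂ)^2)⁻¹)
      MeasureTheory.volume 0 1 := (TT_int hv2).const_mul v
  have ftc := intervalIntegral.integral_eq_sub_of_hasDerivAt key hint
  have : v * TT (v^2) = ∫ t in (0:ℝ)..1, v * (1 - v^2 * (t:ℂ)^2)⁻¹ := by
    rw [TT, ← intervalIntegral.integral_const_mul]
  rw [this, ftc]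
  push_cast
  simp [Complex.log_one]

lemma one_add_ne {v : ℂ} (hv : ‖v‖ ≤ 1/4) : (1 : ℂ) + v ≠ 0 := by
  intro h
  have h2 : ‖v‖ = 1 := by
    have : v = -1 := by linear_combination h
    rw [this]; simp
  linarith

lemma one_add_re {v : ℂ} (hv : ‖v‖ ≤ 1/4) : 0 < ((1 : ℂ) + v).re := by
  have := Complex.abs_re_le_norm v
  have := abs_le.mp this
  simp only [Complex.add_re, Complex.one_re]
  linarith [this.1]

lemma logq {q v : ℂ} (hq : 0 < q.re) (hv : ‖v‖ ≤ 1/4)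
    (h2 : q^2 = (1+v)/(1-v)) :
    Complex.log q = (Complex.log (1+v) - Complex.log (1-v))/2 := by
  have hv' : ‖-v‖ ≤ 1/4 := by rwa [norm_neg]
  have hne1 : (1 : ℂ) + v ≠ 0 := one_add_ne hv
  have hne2 : (1 : ℂ) - v ≠ 0 := by
    have := one_add_ne hv'
    intro h; apply this; linear_combination h
  have hqne : q ≠ 0 := fun h => by simp [h] at hq
  have hexp : Complex.exp (2 * Complex.log q) =
      Complex.exp (Complex.log (1+v) - Complex.log (1-v)) := by
    rw [two_mul, Complex.exp_add, Complex.exp_log hqne, Complex.exp_sub,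
      Complex.exp_log hne1, Complex.exp_log hne2, ← h2]
    ring
  obtain ⟨n, hn⟩ := Complex.exp_eq_exp_iff_exists_int.mp hexp
  have harg1 : |Complex.arg (1+v)| < Real.pi/2 :=
    Complex.abs_arg_lt_pi_div_two_iff.mpr (Or.inl (one_add_re hv))
  have harg2 : |Complex.arg (1-v)| < Real.pi/2 := by
    have : (1 : ℂ) - v = 1 + (-v) := by ring
    rw [this]
    exact Complex.abs_arg_lt_pi_div_two_iff.mpr (Or.inl (one_add_re hv'))
  have hargq : |Complex.arg q| < Real.pi/2 :=
    Complex.abs_arg_lt_pi_div_two_iff.mpr (Or.inl hq)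
  have him2 : 2 * Complex.arg q = Complex.arg (1+v) - Complex.arg (1-v) + n * (2*Real.pi) := by
    have h1 : (2 * Complex.log q).im = 2 * Complex.arg q := by
      simp [Complex.mul_im, Complex.log_im]
    have h2' : ((n : ℂ) * (2 * Real.pi * Complex.I)).im = n * (2*Real.pi) := by
      simp [Complex.mul_im]
    have := congrArg Complex.im hn
    rw [Complex.add_im, h1, Complex.sub_im, Complex.log_im, Complex.log_im, h2'] at this
    linarith [this]
  have hpi := Real.pi_pos
  have hn0 : n = 0 := by
    by_contra hne
    have h1 : (1:ℝ) ≤ |(n:ℝ)| := by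
      rw [← Int.cast_abs]
      exact_mod_cast Int.one_le_abs (by omega)
    have h2' : |(n:ℝ) * (2*Real.pi)| < 2*Real.pi := by
      rw [abs_lt]
      cases' abs_lt.mp hargq with ha hb
      cases' abs_lt.mp harg1 with hc hd
      cases' abs_lt.mp harg2 with he hf
      constructor <;> nlinarith
    rw [abs_mul, abs_of_pos (by linarith : (0:ℝ) < 2*Real.pi)] at h2'
    nlinarith
  rw [hn0] at hn
  simp at hn
  field_simp
  linear_combination hn

lemma half_log_sq {w : ℂ} (hw : w ≠ 0) :
    Complex.exp ((1/2 : ℂ) * Complex.log w)^2 = w := by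
  rw [← Complex.exp_nat_mul,
    show ((2:ℕ):ℂ) * ((1/2:ℂ) * Complex.log w) = Complex.log w by push_cast; ring,
    Complex.exp_log hw]

set_option maxHeartbeats 1000000 in

set_option maxHeartbeats 1000000 in
theorem stmt6 (k : ℕ) :
    ∃ δ ∈ Set.Ioo (0 : ℝ) (1 / 2), ∃ τ₀ > (0 : ℝ), ∃ C > (0 : ℝ),
      ∀ τ : ℝ, τ₀ ≤ τ → ∃ F : ℂ → ℂ,
        DifferentiableOn ℂ F (ball (-1 : ℂ) δ) ∧
        (∀ z ∈ ball (-1 : ℂ) δ,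
          z ∉ (fun x : ℝ => (x : ℂ)) '' Set.Ico (-1) (-1 + δ) →
          F z = -((rr z / 4 -
            (Complex.I * (k : ℂ) / (τ : ℂ)) * Complex.log (-DD z)) ^ 2)) ∧
        (∀ z ∈ ball (-1 : ℂ) δ,
          ‖F z - ((z + 1) / 8) * (1 - 4 * (k : ℂ) / (τ : ℂ)) ^ 2‖
            ≤ C * ‖z + 1‖ ^ ((3 : ℝ) / 2)) := by
  refine ⟨1/100, by norm_num, 8*(k:ℝ)+8, by positivity, 1, by norm_num, ?_⟩
  intro τ hτ
  have hτ0 : (0:ℝ) < τ := lt_of_lt_of_le (by positivity) hτ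
  have hτne : (τ:ℂ) ≠ 0 := Complex.ofReal_ne_zero.mpr hτ0.ne'
  have hknorm : ‖(k:ℂ)/(τ:ℂ)‖ ≤ 1/8 := by
    rw [norm_div, Complex.norm_natCast, Complex.norm_real, Real.norm_eq_abs,
      abs_of_pos hτ0, div_le_iff₀ hτ0]
    nlinarith [Nat.cast_nonneg (α := ℝ) k]
  refine ⟨fun z => (z+1) * (1-z) * ((1/4 : ℂ) - ((k:ℂ)/(τ:ℂ)) * TT ((1-z)*(z+1)))^2,
    ?_, ?_, ?_⟩
  · -- differentiability
    intro z hz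
    have hzn : ‖z+1‖ < 1/100 := by
      rw [mem_ball, dist_eq_norm, sub_neg_eq_add] at hz; exact hz
    have h1z : ‖(1:ℂ) - z‖ ≤ 201/100 := by
      rw [show (1:ℂ) - z = 2 - (z+1) by ring]
      refine le_trans (norm_sub_le _ _) ?_
      have h2n : ‖(2:ℂ)‖ = 2 := by norm_num
      rw [h2n]; linarith
    have hxn : ‖(1-z)*(z+1)‖ < 1/2 := by
      rw [norm_mul]
      nlinarith [norm_nonneg ((1:ℂ)-z), norm_nonneg (z+1)]
    apply DifferentiableAt.differentiableWithinAt
    have hT : DifferentiableAt ℂ TT ((1-z)*(z+1)) := TT_diff hxn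
    have h1 : DifferentiableAt ℂ (fun z : ℂ => (1-z)*(z+1)) z := by fun_prop
    have h2 : DifferentiableAt ℂ (fun z : ℂ => TT ((1-z)*(z+1))) z := by have := hT.comp z h1; exact this
    apply DifferentiableAt.mul (by fun_prop)
    exact ((differentiableAt_const _).sub ((differentiableAt_const _).mul h2)).pow 2
  · -- equality off the cut
    intro z hz hnot
    have hne1 : z ≠ -1 := by
      rintro rfl
      exact hnot ⟨-1, ⟨le_rfl, by norm_num⟩, by push_cast; ring⟩
    have hzn : ‖z+1‖ < 1/100 := by
      rw [mem_ball, dist_eq_norm, sub_neg_eq_add] at hz; exact hz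
    have hz1 : z + 1 ≠ 0 := by
      intro h; apply hne1; linear_combination h
    have hzm1 : z - 1 ≠ 0 := by
      intro h
      have hze : z = 1 := by linear_combination h
      rw [hze] at hzn; norm_num at hzn
    have h1z : ‖(1:ℂ) - z‖ ≤ 201/100 := by
      rw [show (1:ℂ) - z = 2 - (z+1) by ring]
      refine le_trans (norm_sub_le _ _) ?_
      have h2n : ‖(2:ℂ)‖ = 2 := by norm_num
      rw [h2n]; linarith
    have hz1n : ‖z - 1‖ ≤ 201/100 := by
      rw [show z - (1:ℂ) = (z+1) - 2 by ring]
      refine le_trans (norm_sub_le _ _) ?_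
      have h2n : ‖(2:ℂ)‖ = 2 := by norm_num
      rw [h2n]; linarith
    have rr_sq : rr z ^ 2 = (z-1)*(z+1) := by
      rw [rr, mul_pow, half_log_sq hzm1, half_log_sq hz1]
    have hrn : ‖rr z‖ ≤ 1/4 := by
      have h : ‖rr z‖^2 = ‖z-1‖ * ‖z+1‖ := by
        rw [← norm_pow, rr_sq, norm_mul]
      nlinarith [norm_nonneg (rr z), norm_nonneg (z+1)]
    set v : ℂ := -Complex.I * rr z with hv_def
    have hvn : ‖v‖ ≤ 1/4 := by
      rw [hv_def, norm_mul, norm_neg, Complex.norm_I, one_mul]; exact hrn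
    have hv2 : v^2 = (1-z)*(z+1) := by
      have hI2 : (-Complex.I)^2 = -1 := by rw [neg_sq, Complex.I_sq]
      rw [hv_def, mul_pow, hI2, rr_sq]; ring
    have hrr_eq : rr z = Complex.I * v := by
      rw [hv_def]; linear_combination (rr z) * Complex.I_sq
    have hvn' : ‖-v‖ ≤ 1/4 := by rwa [norm_neg]
    have hone_sub_v : (1:ℂ) - v ≠ 0 := by
      intro h; apply one_add_ne hvn'; linear_combination h
    have hone_sub_vn : (3:ℝ)/4 ≤ ‖(1:ℂ) - v‖ := by
      have := norm_sub_norm_le (1:ℂ) v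
      simp only [norm_one] at this; linarith
    have hDD : -DD z = -(z / (1 - v)) := by
      rw [DD, show (1:ℂ) + Complex.I * rr z = 1 - v by rw [hv_def]; ring]
    have hz2 : (1-v)*(1+v) = z^2 := by linear_combination (-1:ℂ) * hv2
    have hq2 : (-DD z)^2 = (1+v)/(1-v) := by
      calc (-DD z)^2 = z^2/(1-v)^2 := by rw [hDD, neg_sq, div_pow]
        _ = ((1-v)*(1+v))/((1-v)*(1-v)) := by rw [← hz2, pow_two]
        _ = (1+v)/(1-v) := mul_div_mul_left _ _ hone_sub_v
    have hqre : 0 < (-DD z).re := by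
      have hq1 : -DD z - 1 = -(((z+1) - v) / (1 - v)) := by
        rw [hDD]; field_simp; ring
      have hq1n : ‖-DD z - 1‖ ≤ 1/2 := by
        rw [hq1, norm_neg, norm_div]
        rw [div_le_iff₀ (by linarith : (0:ℝ) < ‖(1:ℂ) - v‖)]
        have := norm_sub_le (z+1) v
        nlinarith
      have hre := Complex.abs_re_le_norm (-DD z - 1)
      have hre2 := (abs_le.mp hre).1
      have : (-DD z - 1).re = (-DD z).re - 1 := by simp
      rw [this] at hre2
      linarith
    have hlog : Complex.log (-DD z) = v * TT ((1-z)*(z+1)) := by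
      rw [logq hqre hvn hq2, ← vTT hvn, hv2]
    rw [hlog, hrr_eq]
    linear_combination
      (-(((1/4 : ℂ) - ((k:ℂ)/(τ:ℂ)) * TT ((1-z)*(z+1)))^2)) * hv2 +
      ((((1/4 : ℂ) - ((k:ℂ)/(τ:ℂ)) * TT ((1-z)*(z+1)))^2) * v^2) * Complex.I_sq
  · -- estimate
    intro z hz
    by_cases hz1 : z = -1
    · subst hz1
      norm_num [Real.zero_rpow]
    have hzn : ‖z+1‖ < 1/100 := by
      rw [mem_ball, dist_eq_norm, sub_neg_eq_add] at hz; exact hz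
    have hz1' : z + 1 ≠ 0 := by
      intro h; apply hz1; linear_combination h
    have hzpos : 0 < ‖z+1‖ := norm_pos_iff.mpr hz1'
    have h1z : ‖(1:ℂ) - z‖ ≤ 201/100 := by
      rw [show (1:ℂ) - z = 2 - (z+1) by ring]
      refine le_trans (norm_sub_le _ _) ?_
      have h2n : ‖(2:ℂ)‖ = 2 := by norm_num
      rw [h2n]; linarith
    set x : ℂ := (1-z)*(z+1) with hx_def
    have hxn : ‖x‖ ≤ (201/100) * ‖z+1‖ := by
      rw [hx_def, norm_mul]
      nlinarith [norm_nonneg (z+1)]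
    have hxn' : ‖x‖ ≤ 3/4 := by nlinarith
    set a : ℂ := (1/4 : ℂ) - ((k:ℂ)/(τ:ℂ)) with ha_def
    set b : ℂ := (1/4 : ℂ) - ((k:ℂ)/(τ:ℂ)) * TT x with hb_def
    have hban : ‖b - a‖ ≤ (1/2) * ‖x‖ := by
      have hba : b - a = -(((k:ℂ)/(τ:ℂ)) * (TT x - 1)) := by
        rw [ha_def, hb_def]; ring
      rw [hba, norm_neg, norm_mul]
      have ht1 := TT_sub_one hxn'
      have := mul_le_mul hknorm ht1 (norm_nonneg _) (by norm_num)
      linarith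
    have han : ‖a‖ ≤ 3/8 := by
      rw [ha_def]
      refine le_trans (norm_sub_le _ _) ?_
      have h14 : ‖((1:ℂ)/4)‖ = 1/4 := by simp
      rw [h14]; linarith
    have hbn : ‖b‖ ≤ 1/2 := by
      have : b = a + (b - a) := by ring
      rw [this]
      refine le_trans (norm_add_le _ _) ?_
      nlinarith
    have hdiff : (z+1) * (1-z) * b^2 - ((z + 1) / 8) * (1 - 4 * (k : ℂ) / (τ : ℂ)) ^ 2
        = (z+1) * (2*(b-a)*(b+a) - (z+1)*b^2) := by
      rw [ha_def, hb_def]; ring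
    rw [hdiff, norm_mul]
    have hMn : ‖2*(b-a)*(b+a) - (z+1)*b^2‖ ≤ 3 * ‖z+1‖ := by
      refine le_trans (norm_sub_le _ _) ?_
      rw [norm_mul, norm_mul, norm_mul, norm_pow]
      have hba2 : ‖b + a‖ ≤ 7/8 := by
        refine le_trans (norm_add_le _ _) ?_; linarith
      have h1 : ‖(2:ℂ)‖ = 2 := by norm_num
      rw [h1]
      have e1 : ‖b-a‖ * ‖b+a‖ ≤ ((1/2) * ((201/100) * ‖z+1‖)) * (7/8) :=
        mul_le_mul (le_trans hban (by linarith)) hba2 (norm_nonneg _) (by positivity)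
      have e2 : ‖b‖^2 ≤ 1/4 := by nlinarith [norm_nonneg b]
      have e3 : ‖z+1‖ * ‖b‖^2 ≤ ‖z+1‖ * (1/4) :=
        mul_le_mul_of_nonneg_left e2 hzpos.le
      nlinarith
    have hfinal : ‖z+1‖ * ‖2*(b-a)*(b+a) - (z+1)*b^2‖ ≤ 3 * ‖z+1‖^2 := by
      calc ‖z+1‖ * ‖2*(b-a)*(b+a) - (z+1)*b^2‖ ≤ ‖z+1‖ * (3 * ‖z+1‖) :=
            mul_le_mul_of_nonneg_left hMn hzpos.le
        _ = 3 * ‖z+1‖^2 := by ring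
    refine le_trans hfinal ?_
    rw [one_mul]
    have hsq : ‖z+1‖^2 = ‖z+1‖^((3:ℝ)/2) * ‖z+1‖^((1:ℝ)/2) := by
      rw [← Real.rpow_add hzpos,
        show (3:ℝ)/2 + 1/2 = ((2:ℕ):ℝ) by norm_num, Real.rpow_natCast]
    have hhalf : ‖z+1‖^((1:ℝ)/2) ≤ (1/10 : ℝ) := by
      have h1 : ‖z+1‖^((1:ℝ)/2) ≤ (1/100 : ℝ)^((1:ℝ)/2) :=
        Real.rpow_le_rpow (norm_nonneg _) hzn.le (by norm_num)
      have h2 : ((1:ℝ)/100)^((1:ℝ)/2) = 1/10 := by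
        have e : ((1:ℝ)/100) = ((1:ℝ)/10)^(((2:ℕ)):ℝ) := by
          rw [Real.rpow_natCast]; norm_num
        rw [e, ← Real.rpow_mul (by norm_num : (0:ℝ) ≤ 1/10),
          show (((2:ℕ)):ℝ) * ((1:ℝ)/2) = 1 by push_cast; ring, Real.rpow_one]
      linarith
    rw [hsq]
    have h32 : (0:ℝ) ≤ ‖z+1‖^((3:ℝ)/2) := Real.rpow_nonneg (norm_nonneg _) _
    have := mul_le_mul_of_nonneg_left hhalf h32
    linarith
end
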